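/- arXiv:0908.0364 — 4 statements merged into one kernel-verified Lean document; each statement's English description precedes it below -/
import Mathlib

section
/- For all x ∈ ℝ³ and ξ ∈ ℝ³, the bi-quadratic form x₁²ξ₁² + x₂²ξ₂² + x₃²ξ₃² + 2(x₁²ξ₂² + x₂²ξ₃² + x₃²ξ₁²) − 2(x₁x₂ξ₁ξ₂ + x₁x₃ξ₁ξ₃ + x₂x₃ξ₂ξ₃) is nonnegative. -/
/-!
Choi's form equals `2 ∑ᵢ (xᵢ² + xᵢ₋₁²) ξᵢ² - (∑ᵢ xᵢ ξᵢ)²` (indices mod 3). By the weighted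
Cauchy–Schwarz inequality, `(∑ᵢ xᵢ ξᵢ)² ≤ (∑ᵢ xᵢ² / dᵢ) (∑ᵢ dᵢ ξᵢ²)` with `dᵢ = xᵢ² + xᵢ₋₁²`, and
`∑ᵢ xᵢ² / dᵢ ≤ 2` because `a / (a + c) ≤ (a + b) / (a + b + c)` and the right-hand sides sum
cyclically to `2`.
-/

open Finset

section

variable {ι K : Type*} [Field K] [LinearOrder K] [IsStrictOrderedRing K] {a b c : K}

theorem sq_sum_mul_le_sum_sq_div_mul_sum_mul_sq (s : Finset ι) (x d ξ : ι → K)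
    (hd : ∀ i ∈ s, 0 ≤ d i) (hxd : ∀ i ∈ s, d i = 0 → x i = 0) :
    (∑ i ∈ s, x i * ξ i) ^ 2 ≤ (∑ i ∈ s, x i ^ 2 / d i) * ∑ i ∈ s, d i * ξ i ^ 2 := by
  refine sum_sq_le_sum_mul_sum_of_sq_le_mul s (fun i hi ↦ by have := hd i hi; positivity)
    (fun i hi ↦ by have := hd i hi; positivity) fun i hi ↦ ?_
  have hx : d i = 0 → x i ^ 2 = 0 := fun h ↦ by simp [hxd i hi h]
  rw [mul_pow, ← mul_assoc, div_mul_cancel_of_imp hx]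

theorem div_add_le_add_div_add_add (ha : 0 ≤ a) (hb : 0 ≤ b) (hc : 0 ≤ c) :
    a / (a + c) ≤ (a + b) / (a + b + c) := by
  rcases (add_nonneg ha hc).eq_or_lt with hac | hac
  · rw [← hac, div_zero]
    positivity
  · rw [div_le_div_iff₀ hac (by linarith)]
    nlinarith [mul_nonneg hb hc]

theorem div_add_add_div_add_add_div_add_le_two (ha : 0 ≤ a) (hb : 0 ≤ b) (hc : 0 ≤ c) :
    a / (a + c) + b / (b + a) + c / (c + b) ≤ 2 :=
  calc a / (a + c) + b / (b + a) + c / (c + b)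
      ≤ (a + b) / (a + b + c) + (b + c) / (b + c + a) + (c + a) / (c + a + b) := by
        gcongr ?_ + ?_ + ?_
        exacts [div_add_le_add_div_add_add ha hb hc, div_add_le_add_div_add_add hb hc ha,
          div_add_le_add_div_add_add hc ha hb]
    _ = 2 * ((a + b + c) / (a + b + c)) := by ring
    _ ≤ 2 := mul_le_of_le_one_right zero_le_two (div_self_le_one _)

theorem sq_add_add_le_choi_weights (x1 x2 x3 ξ1 ξ2 ξ3 : K) :
    (x1 * ξ1 + x2 * ξ2 + x3 * ξ3) ^ 2 ≤
      2 * ((x1 ^ 2 + x3 ^ 2) * ξ1 ^ 2 + (x2 ^ 2 + x1 ^ 2) * ξ2 ^ 2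
        + (x3 ^ 2 + x2 ^ 2) * ξ3 ^ 2) := by
  set x : Fin 3 → K := ![x1, x2, x3]
  set d : Fin 3 → K := ![x1 ^ 2 + x3 ^ 2, x2 ^ 2 + x1 ^ 2, x3 ^ 2 + x2 ^ 2]
  have hd : ∀ i ∈ univ, 0 ≤ d i := by
    intro i _
    fin_cases i <;> simp only [d, Fin.zero_eta, Fin.mk_one, Fin.reduceFinMk, Matrix.cons_val] <;>
      positivity
  have hxd : ∀ i ∈ univ, d i = 0 → x i = 0 := by
    intro i _
    fin_cases i <;>
      simp only [x, d, Fin.zero_eta, Fin.mk_one, Fin.reduceFinMk, Matrix.cons_val] <;>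
      intro h <;> exact pow_eq_zero_iff two_ne_zero |>.1 (by nlinarith)
  have hsum : ∑ i, x i ^ 2 / d i ≤ 2 := by
    simpa only [x, d, Fin.sum_univ_three, Matrix.cons_val] using
      div_add_add_div_add_add_div_add_le_two (sq_nonneg x1) (sq_nonneg x2) (sq_nonneg x3)
  have hcs := sq_sum_mul_le_sum_sq_div_mul_sum_mul_sq univ x d ![ξ1, ξ2, ξ3] hd hxd
  simp only [x, d, Fin.sum_univ_three, Matrix.cons_val] at hcs hsum
  exact hcs.trans (mul_le_mul_of_nonneg_right hsum (by positivity))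

end

/-- Choi's bi-quadratic form in `x = (x₁,x₂,x₃)` and `ξ = (ξ₁,ξ₂,ξ₃)`
is nonnegative. -/
theorem stmt4 (x1 x2 x3 ξ1 ξ2 ξ3 : ℝ) :
    0 ≤ x1 ^ 2 * ξ1 ^ 2 + x2 ^ 2 * ξ2 ^ 2 + x3 ^ 2 * ξ3 ^ 2
        + 2 * (x1 ^ 2 * ξ2 ^ 2 + x2 ^ 2 * ξ3 ^ 2 + x3 ^ 2 * ξ1 ^ 2)
        - 2 * (x1 * x2 * ξ1 * ξ2 + x1 * x3 * ξ1 * ξ3 + x2 * x3 * ξ2 * ξ3) := by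
  linarith [sq_add_add_le_choi_weights x1 x2 x3 ξ1 ξ2 ξ3]
end

section
/- Let G(x) be the 2×2 symmetric matrix polynomial on ℝ² with entries G₁₁(x) = 2 − 2x₁⁴ − 4x₁²x₂² − 2x₂⁴, G₁₂(x) = G₂₁(x) = 3 − x₁³x₂ − x₁x₂³, and G₂₂(x) = 5 − x₁⁴ − 4x₁²x₂² − x₂⁴. Then G is uniformly matrix sos-concave: there exists a matrix polynomial F(ξ,x) in the joint variables (ξ,x) ∈ ℝ²×ℝ² such that −∇ₓₓ(ξᵀG(x)ξ) = F(ξ,x)ᵀF(ξ,x); in particular −∇ₓₓ(ξᵀG(x)ξ) is positive semidefinite for all x, ξ ∈ ℝ². -/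
/-!
For fixed `ξ = (a, b)`, `y ↦ ξᵀ G(y) ξ` is a polynomial function, so its Hessian at `x = (u, v)`
is the matrix of formal second partial derivatives. Its negative has entries that are
biquadratic in `(a, b)` and `(u, v)`, and it factors as `Fᵀ F` for an explicit `18 × 2` matrix `F`
whose entries are integer combinations of `au, av, bu, bv`. Being of the form `Fᵀ F`, it is
positive semidefinite.
-/

open Matrix MvPolynomial

/-- The Hessian matrix of a scalar function on `ℝⁿ`. -/
noncomputable def hess {n : ℕ} (f : (Fin n → ℝ) → ℝ) (x : Fin n → ℝ) :
    Matrix (Fin n) (Fin n) ℝ :=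
  Matrix.of fun i j => fderiv ℝ (fun y => fderiv ℝ f y (Pi.single j 1)) x (Pi.single i 1)

theorem Derivation.map_ofNat {R A M : Type*} [CommSemiring R] [CommSemiring A] [Algebra R A]
    [AddCommMonoid M] [Module A M] [Module R M] (D : Derivation R A M) (n : ℕ) [n.AtLeastTwo] :
    D (ofNat(n) : A) = 0 :=
  D.map_natCast n

theorem Matrix.posSemidef_transpose_mul_self {m n R : Type*} [Fintype m] [Finite n] [Ring R]
    [PartialOrder R] [StarRing R] [TrivialStar R] [StarOrderedRing R] (A : Matrix m n R) :
    (Aᵀ * A).PosSemidef := by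
  simpa only [conjTranspose_eq_transpose_of_trivial] using posSemidef_conjTranspose_mul_self A

namespace MvPolynomial

variable {σ : Type*}

theorem eval_dotProduct_mulVec {R m : Type*} [CommSemiring R] [Fintype m]
    (P : Matrix m m (MvPolynomial σ R)) (ξ : m → R) (y : σ → R) :
    eval y ((C ∘ ξ) ⬝ᵥ P *ᵥ (C ∘ ξ)) = ξ ⬝ᵥ P.map (eval y) *ᵥ ξ := by
  simp [dotProduct, mulVec, map_sum]

section Calculus

variable {𝕜 : Type*} [NontriviallyNormedField 𝕜] [Fintype σ] [DecidableEq σ]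

theorem hasFDerivAt_eval (p : MvPolynomial σ 𝕜) (x : σ → 𝕜) :
    HasFDerivAt (fun y => eval y p)
      (∑ i, eval x (pderiv i p) • (ContinuousLinearMap.proj i : (σ → 𝕜) →L[𝕜] 𝕜)) x := by
  induction p using MvPolynomial.induction_on with
  | C a =>
    simp only [eval_C]
    refine (hasFDerivAt_const (𝕜 := 𝕜) a x).congr_fderiv ?_
    ext w
    simp
  | add p q hp hq =>
    simp only [map_add]
    refine (hp.add hq).congr_fderiv ?_
    ext w
    simp [add_mul, Finset.sum_add_distrib]
  | mul_X p k hp =>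
    simp only [map_mul, eval_X]
    refine (hp.mul (hasFDerivAt_apply k x)).congr_fderiv ?_
    ext w
    simp [Derivation.leibniz, pderiv_X, Pi.single_apply, apply_ite (eval x), add_mul,
      Finset.sum_add_distrib, Finset.mul_sum, mul_assoc]

theorem fderiv_eval_apply_single (p : MvPolynomial σ 𝕜) (x : σ → 𝕜) (j : σ) :
    fderiv 𝕜 (fun y => eval y p) x (Pi.single j 1) = eval x (pderiv j p) := by
  simp [(hasFDerivAt_eval p x).fderiv, Pi.single_apply]

end Calculus

end MvPolynomial

theorem hess_eval {n : ℕ} (p : MvPolynomial (Fin n) ℝ) (x : Fin n → ℝ) :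
    hess (fun y => eval y p) x = of fun i j => eval x (pderiv i (pderiv j p)) := by
  ext i j
  simp only [hess, of_apply, fderiv_eval_apply_single]

noncomputable def exampleMatrixPoly : Matrix (Fin 2) (Fin 2) (MvPolynomial (Fin 2) ℝ) :=
  !![2 - 2 * X 0 ^ 4 - 4 * X 0 ^ 2 * X 1 ^ 2 - 2 * X 1 ^ 4, 3 - X 0 ^ 3 * X 1 - X 0 * X 1 ^ 3;
     3 - X 0 ^ 3 * X 1 - X 0 * X 1 ^ 3, 5 - X 0 ^ 4 - 4 * X 0 ^ 2 * X 1 ^ 2 - X 1 ^ 4]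

theorem exampleMatrixPoly_map_eval (x : Fin 2 → ℝ) :
    exampleMatrixPoly.map (eval x) =
      !![2 - 2 * x 0 ^ 4 - 4 * x 0 ^ 2 * x 1 ^ 2 - 2 * x 1 ^ 4, 3 - x 0 ^ 3 * x 1 - x 0 * x 1 ^ 3;
         3 - x 0 ^ 3 * x 1 - x 0 * x 1 ^ 3, 5 - x 0 ^ 4 - 4 * x 0 ^ 2 * x 1 ^ 2 - x 1 ^ 4] := by
  ext i j
  fin_cases i <;> fin_cases j <;> simp [exampleMatrixPoly]

def negHessianForm {R : Type*} [CommRing R] (a b u v : R) : Matrix (Fin 2) (Fin 2) R :=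
  !![24*a^2*u^2 + 8*a^2*v^2 + 12*a*b*u*v + 12*b^2*u^2 + 8*b^2*v^2,
     16*a^2*u*v + 6*a*b*u^2 + 6*a*b*v^2 + 16*b^2*u*v;
     16*a^2*u*v + 6*a*b*u^2 + 6*a*b*v^2 + 16*b^2*u*v,
     8*a^2*u^2 + 24*a^2*v^2 + 12*a*b*u*v + 8*b^2*u^2 + 12*b^2*v^2]

theorem neg_hess_exampleMatrixPoly (ξ x : Fin 2 → ℝ) :
    -hess (fun y => eval y ((C ∘ ξ) ⬝ᵥ exampleMatrixPoly *ᵥ (C ∘ ξ))) x =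
      negHessianForm (ξ 0) (ξ 1) (x 0) (x 1) := by
  rw [hess_eval]
  ext i j
  fin_cases i <;> fin_cases j <;>
  · simp only [exampleMatrixPoly, negHessianForm, Matrix.neg_apply, of_apply, cons_val',
      cons_val_zero, cons_val_one, cons_val_fin_one, Fin.isValue, Fin.zero_eta, Fin.mk_one,
      dotProduct, mulVec, Fin.sum_univ_two, Function.comp_apply, map_add, map_sub, map_mul,
      map_pow, map_one, map_natCast, map_zero, smul_eq_mul, nsmul_eq_mul, Nat.cast_ofNat,
      Nat.add_one_sub_one, Derivation.leibniz, Derivation.leibniz_pow, Derivation.map_ofNat,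
      Derivation.map_one_eq_zero, derivation_C, pderiv_X, Pi.single_eq_same, Pi.single_eq_of_ne,
      ne_eq, zero_ne_one, one_ne_zero, not_false_eq_true, eval_C, eval_X, eval_ofNat]
    ring

-- Rows repeat instead of carrying weights such as `√3`, keeping all coefficients integral.
def sosFactor {R : Type*} [CommRing R] (a b u v : R) : Matrix (Fin 18) (Fin 2) R :=
  !![3*a*u + 2*b*v, 3*a*v + 2*b*u;
     2*a*u, 2*a*v;
     a*u, a*v;
     a*u, a*v;
     a*u, a*v;
     2*a*u, 0;
     2*a*u, 0;
     2*a*v, 0;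
     2*a*v, 0;
     0, 2*a*u;
     0, 2*a*u;
     0, 2*a*v;
     0, 2*a*v;
     3*b*u, 3*b*v;
     b*u, b*v;
     b*u, -(b*v);
     b*u, -(b*v);
     2*b*v, 2*b*u]

theorem sosFactor_map {R S : Type*} [CommRing R] [CommRing S] (f : R →+* S) (a b u v : R) :
    (sosFactor a b u v).map f = sosFactor (f a) (f b) (f u) (f v) := by
  ext i j
  fin_cases i <;> fin_cases j <;> simp [sosFactor, map_ofNat]

theorem negHessianForm_eq_transpose_mul {R : Type*} [CommRing R] (a b u v : R) :
    negHessianForm a b u v = (sosFactor a b u v)ᵀ * sosFactor a b u v := by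
  ext i j
  fin_cases i <;> fin_cases j <;>
  · simp only [negHessianForm, sosFactor, mul_apply, transpose_apply, of_apply, cons_val',
      cons_val_zero, cons_val_one, cons_val_succ, cons_val_fin_one, Fin.isValue, Fin.zero_eta,
      Fin.mk_one, Fin.sum_univ_succ, Finset.univ_unique, Fin.default_eq_zero, Finset.sum_const,
      Finset.card_singleton, one_smul]
    ring

/-- the concrete `2×2` quartic matrix polynomial `G` of Example 2.5 is
uniformly matrix sos-concave: `-∇ₓₓ(ξᵀG(x)ξ) = F(ξ,x)ᵀ F(ξ,x)` for a single matrix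
polynomial `F` in the joint variables `(ξ,x)`; in particular `-∇ₓₓ(ξᵀG(x)ξ) ⪰ 0`
for all `x, ξ ∈ ℝ²`. -/
theorem stmt6
    (G : (Fin 2 → ℝ) → Matrix (Fin 2) (Fin 2) ℝ)
    (hG : ∀ x, G x =
      !![2 - 2 * x 0 ^ 4 - 4 * x 0 ^ 2 * x 1 ^ 2 - 2 * x 1 ^ 4,
         3 - x 0 ^ 3 * x 1 - x 0 * x 1 ^ 3;
         3 - x 0 ^ 3 * x 1 - x 0 * x 1 ^ 3,
         5 - x 0 ^ 4 - 4 * x 0 ^ 2 * x 1 ^ 2 - x 1 ^ 4]) :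
    (∃ (k : ℕ) (F : Matrix (Fin k) (Fin 2) (MvPolynomial (Fin 2 ⊕ Fin 2) ℝ)),
      ∀ (ξ : Fin 2 → ℝ) (x : Fin 2 → ℝ),
        -(hess (fun y => ξ ⬝ᵥ (G y).mulVec ξ) x)
          = (Matrix.of fun i j => eval (Sum.elim ξ x) (F i j))ᵀ
            * (Matrix.of fun i j => eval (Sum.elim ξ x) (F i j)))
    ∧ (∀ (x ξ : Fin 2 → ℝ),
        (-(hess (fun y => ξ ⬝ᵥ (G y).mulVec ξ) x)).PosSemidef) := by
  let F : Matrix (Fin 18) (Fin 2) (MvPolynomial (Fin 2 ⊕ Fin 2) ℝ) :=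
    sosFactor (X (Sum.inl 0)) (X (Sum.inl 1)) (X (Sum.inr 0)) (X (Sum.inr 1))
  have hquad (ξ : Fin 2 → ℝ) :
      (fun y => ξ ⬝ᵥ G y *ᵥ ξ) =
        fun y => eval y ((C ∘ ξ) ⬝ᵥ exampleMatrixPoly *ᵥ (C ∘ ξ)) := by
    funext y
    rw [eval_dotProduct_mulVec, exampleMatrixPoly_map_eval, hG]
  have hsos (ξ x : Fin 2 → ℝ) :
      -hess (fun y => ξ ⬝ᵥ G y *ᵥ ξ) x
        = (F.map (eval (Sum.elim ξ x)))ᵀ * F.map (eval (Sum.elim ξ x)) := by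
    rw [hquad, neg_hess_exampleMatrixPoly, sosFactor_map, negHessianForm_eq_transpose_mul]
    simp only [eval_X, Sum.elim_inl, Sum.elim_inr]
  refine ⟨⟨18, F, hsos⟩, fun x ξ => ?_⟩
  rw [hsos]
  exact posSemidef_transpose_mul_self _
end

section
/- Let G(x) be the 2×2 symmetric matrix rational function on ℝ² given by G(x) = [[7−x₁+2x₂, 5],[5, 11−x₂]] − (1/(x₁x₂))·[[x₁ + x₂³, x₂²],[x₂², x₂]]. Then for all x, u ∈ ℝ² with x₁x₂ ≠ 0 and u₁u₂ ≠ 0, and all ξ ∈ ℝ², the identity x₁x₂u₁²u₂²·(ξᵀG(u)ξ + (∇ₓ(ξᵀG(x)ξ))|_{x=u} · (x−u) − ξᵀG(x)ξ) = x₂u₂²(u₁ξ₂ − x₁ξ₂ + u₁x₂ξ₁ − u₂x₁ξ₁)² + x₁u₁²ξ₁²(u₂ − x₂)² holds; in particular, G is uniformly q-module matrix concave over the nonnegative orthant ℝ₊² (with g₁(x) = x₁, g₂(x) = x₂). -/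
/-!
Away from the pole, `ξᵀG(y)ξ = p(y) - n(y)/(y₀y₁)` with `p` affine and `n` polynomial, so the
quotient rule gives its gradient explicitly. Multiplying the linearization error by
`x₀x₁u₀²u₁²` clears every denominator, and the resulting polynomial is `x₁` times one square
plus `x₀` times another; these two squares are the only nonzero entries of the certificate.
-/

open Matrix MvPolynomial

def IsSos {σ : Type*} (f : MvPolynomial σ ℝ) : Prop :=
  ∃ (k : ℕ) (q : Fin k → MvPolynomial σ ℝ), f = ∑ i, q i ^ 2

lemma isSos_zero {σ : Type*} : IsSos (0 : MvPolynomial σ ℝ) :=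
  ⟨0, fun _ => 0, by simp⟩

lemma isSos_sq {σ : Type*} (p : MvPolynomial σ ℝ) : IsSos (p ^ 2) :=
  ⟨1, fun _ => p, by simp⟩

theorem HasFDerivAt.fun_div {𝕜 E : Type*} [NontriviallyNormedField 𝕜] [NormedAddCommGroup E]
    [NormedSpace 𝕜 E] {c d : E → 𝕜} {c' d' : E →L[𝕜] 𝕜} {x : E}
    (hc : HasFDerivAt c c' x) (hd : HasFDerivAt d d' x) (hx : d x ≠ 0) :
    HasFDerivAt (fun y => c y / d y) ((d x ^ 2)⁻¹ • (d x • c' - c x • d')) x := by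
  have hinv : HasFDerivAt (fun y => (d y)⁻¹) (-(d x ^ 2)⁻¹ • d') x :=
    (hasDerivAt_inv hx).comp_hasFDerivAt x hd
  simp only [div_eq_mul_inv]
  refine (hc.fun_mul hinv).congr_fderiv ?_
  ext h
  simp only [_root_.add_apply, _root_.smul_apply, _root_.sub_apply, smul_eq_mul]
  field_simp
  ring

noncomputable def exampleG (x : Fin 2 → ℝ) : Matrix (Fin 2) (Fin 2) ℝ :=
  !![7 - x 0 + 2 * x 1, 5; 5, 11 - x 1]
    - (x 0 * x 1)⁻¹ • !![x 0 + x 1 ^ 3, x 1 ^ 2; x 1 ^ 2, x 1]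

section QuadraticForm

variable (ξ : Fin 2 → ℝ)

lemma quadForm_exampleG (y : Fin 2 → ℝ) :
    ξ ⬝ᵥ exampleG y *ᵥ ξ = (7 - y 0 + 2 * y 1) * ξ 0 ^ 2 + 10 * ξ 0 * ξ 1 + (11 - y 1) * ξ 1 ^ 2
      - ((y 0 + y 1 ^ 3) * ξ 0 ^ 2 + 2 * y 1 ^ 2 * ξ 0 * ξ 1 + y 1 * ξ 1 ^ 2) / (y 0 * y 1) := by
  simp only [exampleG, dotProduct, mulVec, smul_of, smul_cons, smul_eq_mul, smul_empty,
    Matrix.sub_apply, of_apply, cons_val', cons_val_fin_one, Fin.sum_univ_two, cons_val_zero,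
    cons_val_one]
  ring

lemma hasFDerivAt_quadForm_exampleG {u : Fin 2 → ℝ} (hu : u 0 * u 1 ≠ 0) :
    HasFDerivAt (fun y => ξ ⬝ᵥ exampleG y *ᵥ ξ)
      ((((u 1 / u 0) ^ 2 - 1) * ξ 0 ^ 2 + 2 * u 1 / u 0 ^ 2 * ξ 0 * ξ 1 + (ξ 1 / u 0) ^ 2) •
          (ContinuousLinearMap.proj 0 : (Fin 2 → ℝ) →L[ℝ] ℝ)
        + ((2 + 1 / u 1 ^ 2 - 2 * u 1 / u 0) * ξ 0 ^ 2 - 2 / u 0 * ξ 0 * ξ 1 - ξ 1 ^ 2) •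
          ContinuousLinearMap.proj 1) u := by
  have h0 := hasFDerivAt_apply (𝕜 := ℝ) (F' := fun _ : Fin 2 => ℝ) 0 u
  have h1 := hasFDerivAt_apply (𝕜 := ℝ) (F' := fun _ : Fin 2 => ℝ) 1 u
  have hreg := (((((hasFDerivAt_const 7 u).sub h0).add (h1.const_mul 2)).mul_const
    (ξ 0 ^ 2)).add_const (10 * ξ 0 * ξ 1)).add
    (((hasFDerivAt_const 11 u).sub h1).mul_const (ξ 1 ^ 2))
  have hnum := (((h0.add (h1.pow 3)).mul_const (ξ 0 ^ 2)).add
    (((h1.pow 2).const_mul 2).mul_const (ξ 0) |>.mul_const (ξ 1))).add (h1.mul_const (ξ 1 ^ 2))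
  rw [funext (quadForm_exampleG ξ)]
  refine (hreg.sub (hnum.fun_div (h0.mul h1) hu)).congr_fderiv ?_
  have hu0 : u 0 ≠ 0 := left_ne_zero_of_mul hu
  have hu1 : u 1 ≠ 0 := right_ne_zero_of_mul hu
  ext h
  simp only [zero_sub, smul_add, smul_neg, Pi.mul_apply, Nat.add_one_sub_one, nsmul_eq_mul,
    Nat.cast_ofNat, pow_one, Pi.add_apply, _root_.sub_apply, _root_.add_apply, _root_.neg_apply,
    _root_.smul_apply, ContinuousLinearMap.proj_apply, smul_eq_mul, one_div]
  field_simp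
  ring

theorem linearizationError_exampleG {x u : Fin 2 → ℝ} (hx : x 0 * x 1 ≠ 0) (hu : u 0 * u 1 ≠ 0) :
    x 0 * x 1 * (u 0) ^ 2 * (u 1) ^ 2 *
        (ξ ⬝ᵥ (exampleG u).mulVec ξ
          + fderiv ℝ (fun y => ξ ⬝ᵥ (exampleG y).mulVec ξ) u (x - u)
          - ξ ⬝ᵥ (exampleG x).mulVec ξ)
      = x 1 * (u 1) ^ 2 *
          (u 0 * ξ 1 - x 0 * ξ 1 + u 0 * x 1 * ξ 0 - u 1 * x 0 * ξ 0) ^ 2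
        + x 0 * (u 0) ^ 2 * (ξ 0) ^ 2 * (u 1 - x 1) ^ 2 := by
  have hx0 : x 0 ≠ 0 := left_ne_zero_of_mul hx
  have hx1 : x 1 ≠ 0 := right_ne_zero_of_mul hx
  have hu0 : u 0 ≠ 0 := left_ne_zero_of_mul hu
  have hu1 : u 1 ≠ 0 := right_ne_zero_of_mul hu
  rw [(hasFDerivAt_quadForm_exampleG ξ hu).fderiv, quadForm_exampleG, quadForm_exampleG]
  simp only [_root_.add_apply, _root_.smul_apply, ContinuousLinearMap.proj_apply, Pi.sub_apply,
    smul_eq_mul]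
  field_simp
  ring

end QuadraticForm

/-- `sosCertificate i j` is the multiplier of `gᵢ(x) gⱼ(u)`, where `g = (1, x₀, x₁)`. -/
noncomputable def sosCertificate : Fin 3 → Fin 3 → MvPolynomial (Fin 2 ⊕ Fin 2 ⊕ Fin 2) ℝ :=
  let x i := X (Sum.inl i)
  let u i := X (Sum.inr (Sum.inl i))
  let ξ i := X (Sum.inr (Sum.inr i))
  ![![0, 0, 0],
    ![(u 0 * ξ 0 * (u 1 - x 1)) ^ 2, 0, 0],
    ![(u 1 * (u 0 * ξ 1 - x 0 * ξ 1 + u 0 * x 1 * ξ 0 - u 1 * x 0 * ξ 0)) ^ 2, 0, 0]]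

lemma isSos_sosCertificate (i j : Fin 3) : IsSos (sosCertificate i j) := by
  fin_cases i <;> fin_cases j <;> first | exact isSos_zero | exact isSos_sq _

lemma sum_eval_sosCertificate (x u ξ : Fin 2 → ℝ) :
    ∑ i : Fin 3, (![1, x 0, x 1] i) *
        ∑ j : Fin 3, (![1, u 0, u 1] j) * eval (Sum.elim x (Sum.elim u ξ)) (sosCertificate i j)
      = x 1 * (u 1) ^ 2 * (u 0 * ξ 1 - x 0 * ξ 1 + u 0 * x 1 * ξ 0 - u 1 * x 0 * ξ 0) ^ 2
        + x 0 * (u 0) ^ 2 * (ξ 0) ^ 2 * (u 1 - x 1) ^ 2 := by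
  simp only [sosCertificate, Fin.sum_univ_three, cons_val', cons_val_fin_one, cons_val_zero,
    cons_val_one, cons_val, map_zero, map_pow, map_mul, map_sub, map_add, eval_X, Sum.elim_inl,
    Sum.elim_inr]
  ring

/-- Example 4.4: for the concrete `2×2` matrix rational function `G`
with denominator `x₁x₂`, the stated sos identity holds, and consequently `G` is
uniformly q-module matrix concave over the nonnegative orthant `ℝ₊²`
(with `g₀ = 1, g₁(x) = x₁, g₂(x) = x₂`). -/
theorem stmt17
    (G : (Fin 2 → ℝ) → Matrix (Fin 2) (Fin 2) ℝ)
    (hG : ∀ x, G x =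
      !![7 - x 0 + 2 * x 1, 5; 5, 11 - x 1]
        - (x 0 * x 1)⁻¹ • !![x 0 + x 1 ^ 3, x 1 ^ 2; x 1 ^ 2, x 1]) :
    -- the explicit identity
    (∀ (x u : Fin 2 → ℝ) (ξ : Fin 2 → ℝ), x 0 * x 1 ≠ 0 → u 0 * u 1 ≠ 0 →
      x 0 * x 1 * (u 0) ^ 2 * (u 1) ^ 2 *
        (ξ ⬝ᵥ (G u).mulVec ξ
          + fderiv ℝ (fun y => ξ ⬝ᵥ (G y).mulVec ξ) u (x - u)
          - ξ ⬝ᵥ (G x).mulVec ξ)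
      = x 1 * (u 1) ^ 2 *
          (u 0 * ξ 1 - x 0 * ξ 1 + u 0 * x 1 * ξ 0 - u 1 * x 0 * ξ 0) ^ 2
        + x 0 * (u 0) ^ 2 * (ξ 0) ^ 2 * (u 1 - x 1) ^ 2)
    -- `G` is uniformly q-module matrix concave over `ℝ₊²`: there are sos polynomials
    -- `σ_{ij}(x,u,ξ)` in the joint variables such that
    -- `den(G)(x)·den(G)(u)²·(linearization error) = Σᵢ gᵢ(x) Σⱼ gⱼ(u) σ_{ij}(x,u,ξ)`
    ∧ (∃ σ : Fin 3 → Fin 3 → MvPolynomial (Fin 2 ⊕ Fin 2 ⊕ Fin 2) ℝ,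
        (∀ i j, IsSos (σ i j)) ∧
        ∀ (x u ξ : Fin 2 → ℝ), x 0 * x 1 ≠ 0 → u 0 * u 1 ≠ 0 →
          (x 0 * x 1) * (u 0 * u 1) ^ 2 *
            (ξ ⬝ᵥ (G u).mulVec ξ
              + fderiv ℝ (fun y => ξ ⬝ᵥ (G y).mulVec ξ) u (x - u)
              - ξ ⬝ᵥ (G x).mulVec ξ)
          = ∑ i : Fin 3, (![1, x 0, x 1] i) *
              ∑ j : Fin 3, (![1, u 0, u 1] j) *
                eval (Sum.elim x (Sum.elim u ξ)) (σ i j)) := by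
  obtain rfl : G = exampleG := funext hG
  refine ⟨fun x u ξ hx hu => linearizationError_exampleG ξ hx hu,
    sosCertificate, isSos_sosCertificate, fun x u ξ hx hu => ?_⟩
  rw [sum_eval_sosCertificate, ← linearizationError_exampleG ξ hx hu]
  ring
end

section
/- Let Q(x) be the 3×3 symmetric matrix polynomial on ℝ² with rows [x₁x₂+2, x₁x₂, 0], [x₁x₂, x₁x₂−1, 0], [0, 0, x₁+x₂]. Then: (i) for every x ∈ ℝ² with x₁ ≥ 0 and x₂ ≥ 0, Q(x) ⪰ 0 if and only if x₁x₂ ≥ 2; hence {x ∈ ℝ₊² : Q(x) ⪰ 0} = {x ∈ ℝ₊² : x₁x₂ ≥ 2}, which is a convex set; (ii) nevertheless Q is not matrix concave on ℝ₊²: there exist ξ ∈ ℝ³, u, v ∈ ℝ₊² and θ ∈ [0,1] such that ξᵀQ(θu + (1−θ)v)ξ < θ·ξᵀQ(u)ξ + (1−θ)·ξᵀQ(v)ξ. -/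
/-!
`Q x` depends on `x` only through `p = x₁x₂` and `s = x₁ + x₂`, and it is block diagonal.
Completing the square, `(p + 2) ξᵀQξ = ((p + 2)ξ₁ + pξ₂)² + (p - 2)ξ₂² + (p + 2)sξ₃²`,
so on the orthant `Q x ⪰ 0` exactly when `p ≥ 2`, and the superlevel sets of `x₁x₂` on the
orthant are convex. Along `ξ = (1, 1, 0)`, however, `ξᵀQ(x)ξ = 4x₁x₂ + 1`, and the product
`x₁x₂` is not concave along the diagonal.
-/

open Matrix

namespace Stmt19

def qMatrix (p s : ℝ) : Matrix (Fin 3) (Fin 3) ℝ :=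
  !![p + 2, p, 0;
     p, p - 1, 0;
     0, 0, s]

lemma qMatrix_isHermitian (p s : ℝ) : (qMatrix p s).IsHermitian := by
  ext i j
  fin_cases i <;> fin_cases j <;> simp [qMatrix]

lemma dotProduct_qMatrix_mulVec (p s : ℝ) (ξ : Fin 3 → ℝ) :
    ξ ⬝ᵥ qMatrix p s *ᵥ ξ =
      (p + 2) * ξ 0 ^ 2 + 2 * p * ξ 0 * ξ 1 + (p - 1) * ξ 1 ^ 2 + s * ξ 2 ^ 2 := by
  simp only [qMatrix, dotProduct, mulVec, Fin.sum_univ_three, of_apply, cons_val', cons_val_zero,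
    cons_val_one, cons_val, cons_val_fin_one]
  ring

lemma qMatrix_posSemidef_iff (p s : ℝ) : (qMatrix p s).PosSemidef ↔ 2 ≤ p ∧ 0 ≤ s := by
  constructor
  · intro h
    have form : ∀ ξ : Fin 3 → ℝ,
        0 ≤ (p + 2) * ξ 0 ^ 2 + 2 * p * ξ 0 * ξ 1 + (p - 1) * ξ 1 ^ 2 + s * ξ 2 ^ 2 := by
      intro ξ
      simpa only [star_trivial, dotProduct_qMatrix_mulVec] using h.dotProduct_mulVec_nonneg ξ
    have h₁ : 0 ≤ p - 1 := by simpa using form ![0, 1, 0]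
    have h₂ : 0 ≤ (p + 2) * (p - 2) := by
      convert form ![p, -(p + 2), 0] using 1
      simp only [cons_val_zero, cons_val_one, cons_val]
      ring
    exact ⟨by nlinarith, by simpa using form ![0, 0, 1]⟩
  · rintro ⟨hp, hs⟩
    refine .of_dotProduct_mulVec_nonneg (qMatrix_isHermitian p s) fun ξ => ?_
    rw [star_trivial, dotProduct_qMatrix_mulVec]
    have hsquare : (p + 2) * ((p + 2) * ξ 0 ^ 2 + 2 * p * ξ 0 * ξ 1 + (p - 1) * ξ 1 ^ 2
        + s * ξ 2 ^ 2) = ((p + 2) * ξ 0 + p * ξ 1) ^ 2 + (p - 2) * ξ 1 ^ 2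
          + (p + 2) * s * ξ 2 ^ 2 := by ring
    refine nonneg_of_mul_nonneg_right ?_ (by linarith : (0 : ℝ) < p + 2)
    rw [hsquare]
    have hp₂ : 0 ≤ p - 2 := sub_nonneg.2 hp
    have hp₀ : 0 ≤ p + 2 := by linarith
    positivity

lemma dotProduct_qMatrix_mulVec_one_one_zero (p s : ℝ) :
    ![1, 1, 0] ⬝ᵥ qMatrix p s *ᵥ ![1, 1, 0] = 4 * p + 1 := by
  rw [dotProduct_qMatrix_mulVec]
  simp only [cons_val_zero, cons_val_one, cons_val]
  ring

lemma two_mul_le_add_mul_of_le_mul {a b d e c : ℝ} (ha : 0 ≤ a) (hb : 0 ≤ b) (hd : 0 ≤ d)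
    (he : 0 ≤ e) (hab : c ≤ a * b) (hde : c ≤ d * e) : 2 * c ≤ a * e + d * b := by
  rcases le_or_gt c 0 with hc | hc
  · nlinarith [mul_nonneg ha he, mul_nonneg hd hb]
  · have hprod : c ^ 2 ≤ (a * e) * (d * b) := by
      calc c ^ 2 ≤ (a * b) * (d * e) := by nlinarith
        _ = (a * e) * (d * b) := by ring
    nlinarith [sq_nonneg (a * e - d * b), mul_nonneg ha he, mul_nonneg hd hb]

lemma convex_setOf_nonneg_le_mul (c : ℝ) :
    Convex ℝ {x : Fin 2 → ℝ | 0 ≤ x 0 ∧ 0 ≤ x 1 ∧ c ≤ x 0 * x 1} := by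
  rintro x ⟨hx₀, hx₁, hx⟩ y ⟨hy₀, hy₁, hy⟩ a b ha hb hab
  simp only [Set.mem_ofPred_eq, Pi.add_apply, Pi.smul_apply, smul_eq_mul]
  refine ⟨by positivity, by positivity, ?_⟩
  have hcross := two_mul_le_add_mul_of_le_mul hx₀ hx₁ hy₀ hy₁ hx hy
  calc c = (a + b) ^ 2 * c := by rw [hab]; ring
    _ = a ^ 2 * c + b ^ 2 * c + a * b * (2 * c) := by ring
    _ ≤ a ^ 2 * (x 0 * x 1) + b ^ 2 * (y 0 * y 1) + a * b * (x 0 * y 1 + y 0 * x 1) := by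
      gcongr
    _ = (a * x 0 + b * y 0) * (a * x 1 + b * y 1) := by ring

end Stmt19

/-- for the concrete `3×3` matrix polynomial `Q` of the Conclusions
section: (i) on the nonnegative orthant, `Q(x) ⪰ 0` iff `x₁x₂ ≥ 2`, so
`{x ∈ ℝ₊² : Q(x) ⪰ 0} = {x ∈ ℝ₊² : x₁x₂ ≥ 2}`, which is convex; (ii) nevertheless `Q`
is not matrix concave on `ℝ₊²`. -/
theorem stmt19
    (Q : (Fin 2 → ℝ) → Matrix (Fin 3) (Fin 3) ℝ)
    (hQ : ∀ x, Q x =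
      !![x 0 * x 1 + 2, x 0 * x 1, 0;
         x 0 * x 1, x 0 * x 1 - 1, 0;
         0, 0, x 0 + x 1]) :
    -- (i)
    (∀ x : Fin 2 → ℝ, 0 ≤ x 0 → 0 ≤ x 1 → ((Q x).PosSemidef ↔ 2 ≤ x 0 * x 1))
    ∧ {x : Fin 2 → ℝ | 0 ≤ x 0 ∧ 0 ≤ x 1 ∧ (Q x).PosSemidef}
        = {x : Fin 2 → ℝ | 0 ≤ x 0 ∧ 0 ≤ x 1 ∧ 2 ≤ x 0 * x 1}
    ∧ Convex ℝ {x : Fin 2 → ℝ | 0 ≤ x 0 ∧ 0 ≤ x 1 ∧ (Q x).PosSemidef}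
    -- (ii)
    ∧ ∃ (ξ : Fin 3 → ℝ) (u v : Fin 2 → ℝ) (θ : ℝ),
        0 ≤ u 0 ∧ 0 ≤ u 1 ∧ 0 ≤ v 0 ∧ 0 ≤ v 1 ∧ 0 ≤ θ ∧ θ ≤ 1 ∧
        ξ ⬝ᵥ (Q (θ • u + (1 - θ) • v)).mulVec ξ
          < θ * (ξ ⬝ᵥ (Q u).mulVec ξ) + (1 - θ) * (ξ ⬝ᵥ (Q v).mulVec ξ) := by
  have hQ' : ∀ x, Q x = Stmt19.qMatrix (x 0 * x 1) (x 0 + x 1) := hQ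
  have hpsd : ∀ x : Fin 2 → ℝ, 0 ≤ x 0 → 0 ≤ x 1 → ((Q x).PosSemidef ↔ 2 ≤ x 0 * x 1) := by
    intro x h₀ h₁
    rw [hQ', Stmt19.qMatrix_posSemidef_iff]
    exact and_iff_left (add_nonneg h₀ h₁)
  have hset : {x : Fin 2 → ℝ | 0 ≤ x 0 ∧ 0 ≤ x 1 ∧ (Q x).PosSemidef}
      = {x : Fin 2 → ℝ | 0 ≤ x 0 ∧ 0 ≤ x 1 ∧ 2 ≤ x 0 * x 1} :=
    Set.ext fun x => and_congr_right fun h₀ => and_congr_right fun h₁ => hpsd x h₀ h₁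
  refine ⟨hpsd, hset, hset ▸ Stmt19.convex_setOf_nonneg_le_mul 2, ?_⟩
  refine ⟨![1, 1, 0], ![0, 0], ![2, 2], 1 / 2, by norm_num, by norm_num, by norm_num,
    by norm_num, by norm_num, by norm_num, ?_⟩
  simp only [hQ', Stmt19.dotProduct_qMatrix_mulVec_one_one_zero]
  norm_num
end
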